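/- In-time color-respecting swaps preserve stable refinement colors: if c is a stable coloring of temporal graph G (i.e., c(v,t)=c(w,s) iff (c(v,t), successor color multiset of (v,t)) = (c(w,s), successor color multiset of (w,s))) and G' is obtained from G by an in-time swap respecting c, then c is also a stable coloring of G', and for all d, the refinement colors of G and G' (temporal color refinement started uniformly, after d rounds) induce the same partition of temporal nodes. -/

import Mathlib

/-- The type of refinement colors at depth `d`, starting from initial colors in `C0`:
a depth-`(d+1)` color is a pair of the depth-`d` color and a multiset of depth-`d` colors. -/
def ColorT (C0 : Type) : ℕ → Type
  | 0 => C0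
  | d+1 => ColorT C0 d × Multiset (ColorT C0 d)

instance colorTDecEq (C0 : Type) [DecidableEq C0] : ∀ d, DecidableEq (ColorT C0 d)
  | 0 => inferInstanceAs (DecidableEq C0)
  | d+1 => letI := colorTDecEq C0 d
           inferInstanceAs (DecidableEq (ColorT C0 d × Multiset (ColorT C0 d)))

variable {V T C0 : Type} [DecidableEq V] [LinearOrder T]

/-- Causal successor set of temporal node `(v,t)`: endpoints of edges outgoing
from `v` at times `≥ t`. -/
def succF (E : Finset (V × V × T)) (v : V) (t : T) : Finset (V × T) :=
  (E.filter (fun e => e.1 = v ∧ t ≤ e.2.2)).image (fun e => e.2)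

/-- Temporal color refinement (perfect-hash version):
`refine E c0 (d+1) v t = (refine E c0 d v t, multiset of depth-d colors of successors)`. -/
def refine (E : Finset (V × V × T)) (c0 : V → T → C0) :
    (d : ℕ) → V → T → ColorT C0 d
  | 0, v, t => c0 v t
  | d+1, v, t =>
      (refine E c0 d v t,
       (succF E v t).val.map (fun p => refine E c0 d p.1 p.2))

/-- Multiset of colors of the causal successors of `(v,t)`. -/
def succColors {C : Type} (E : Finset (V × V × T)) (c : V → T → C) (v : V) (t : T) :
    Multiset C :=
  (succF E v t).val.map (fun p => c p.1 p.2)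

/-- Result of the in-time swap (symmetric directed representation of an undirected graph). -/
def swapE (E : Finset (V × V × T)) (x y r s : V) (t : T) : Finset (V × V × T) :=
  (E \ ({(x,y,t), (y,x,t), (r,s,t), (s,r,t)} : Finset (V × V × T)))
    ∪ ({(x,s,t), (s,x,t), (r,y,t), (y,r,t)} : Finset (V × V × T))

lemma mem_succF {E : Finset (V × V × T)} {v : V} {t : T} {p : V × T} :
    p ∈ succF E v t ↔ (v, p) ∈ E ∧ t ≤ p.2 := by
  simp only [succF, Finset.mem_image, Finset.mem_filter]
  constructor
  · rintro ⟨e, ⟨he, rfl, ht⟩, rfl⟩; exact ⟨he, ht⟩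
  · rintro ⟨he, ht⟩; exact ⟨(v, p), ⟨he, rfl, ht⟩, rfl⟩

lemma mem_swapE {E : Finset (V×V×T)} {x y r s : V} {t : T} {e : V×V×T} :
    e ∈ swapE E x y r s t ↔
      (e ∈ E ∧ e ≠ (x,y,t) ∧ e ≠ (y,x,t) ∧ e ≠ (r,s,t) ∧ e ≠ (s,r,t))
      ∨ e = (x,s,t) ∨ e = (s,x,t) ∨ e = (r,y,t) ∨ e = (y,r,t) := by
  simp only [swapE, Finset.mem_union, Finset.mem_sdiff, Finset.mem_insert,
    Finset.mem_singleton]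
  tauto

lemma swapE_perm1 (E : Finset (V×V×T)) (x y r s : V) (t : T) :
    swapE E y x s r t = swapE E x y r s t := by
  ext e; simp only [mem_swapE]; tauto

lemma swapE_perm2 (E : Finset (V×V×T)) (x y r s : V) (t : T) :
    swapE E r s x y t = swapE E x y r s t := by
  ext e; simp only [mem_swapE]; tauto

lemma succF_swap_late {E : Finset (V×V×T)} {x y r s : V} {t : T}
    (v : V) {t' : T} (h : ¬ t' ≤ t) :
    succF (swapE E x y r s t) v t' = succF E v t' := by
  ext ⟨a, b⟩
  simp only [mem_succF, mem_swapE, Prod.mk.injEq, ne_eq]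
  constructor
  · rintro ⟨⟨hm, -⟩ | ⟨rfl,rfl,rfl⟩ | ⟨rfl,rfl,rfl⟩ | ⟨rfl,rfl,rfl⟩ | ⟨rfl,rfl,rfl⟩, ht⟩
    · exact ⟨hm, ht⟩
    all_goals exact absurd ht h
  · rintro ⟨hm, ht⟩
    refine ⟨Or.inl ⟨hm, ?_, ?_, ?_, ?_⟩, ht⟩ <;>
      · rintro ⟨rfl, rfl, rfl⟩; exact h ht

lemma succF_swap_other {E : Finset (V×V×T)} {x y r s : V} {t : T}
    {v : V} (hvx : v ≠ x) (hvy : v ≠ y) (hvr : v ≠ r) (hvs : v ≠ s) (t' : T) :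
    succF (swapE E x y r s t) v t' = succF E v t' := by
  ext ⟨a, b⟩
  simp only [mem_succF, mem_swapE, Prod.mk.injEq, ne_eq]
  constructor
  · rintro ⟨⟨hm, -⟩ | ⟨h1,-⟩ | ⟨h1,-⟩ | ⟨h1,-⟩ | ⟨h1,-⟩, ht⟩
    · exact ⟨hm, ht⟩
    · exact absurd h1 hvx
    · exact absurd h1 hvs
    · exact absurd h1 hvr
    · exact absurd h1 hvy
  · rintro ⟨hm, ht⟩
    refine ⟨Or.inl ⟨hm, ?_, ?_, ?_, ?_⟩, ht⟩ <;>
      · rintro ⟨h1, -⟩; first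
          | exact hvx h1 | exact hvy h1 | exact hvr h1 | exact hvs h1

lemma succF_swap_x {E : Finset (V×V×T)} {x y r s : V} {t : T}
    (hxy' : x ≠ y) (hxr : x ≠ r) (hxs : x ≠ s)
    (hxyE : (x,y,t) ∈ E) (hxsE : (x,s,t) ∉ E) {t' : T} (h : t' ≤ t) :
    succF (swapE E x y r s t) x t' = insert (s,t) ((succF E x t').erase (y,t)) := by
  ext ⟨a, b⟩
  simp only [mem_succF, mem_swapE, Finset.mem_insert, Finset.mem_erase, Prod.mk.injEq, ne_eq]
  constructor
  · rintro ⟨⟨hm, h1, -, -, -⟩ | ⟨-,rfl,rfl⟩ | ⟨h1,-⟩ | ⟨h1,-⟩ | ⟨h1,-⟩, ht⟩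
    · refine Or.inr ⟨?_, hm, ht⟩
      intro he; exact h1 ⟨trivial, he.1, he.2⟩
    · exact Or.inl (by simp)
    · exact absurd h1 hxs
    · exact absurd h1 hxr
    · exact absurd h1 hxy'
  · rintro (⟨rfl, rfl⟩ | ⟨hne, hm, ht⟩)
    · exact ⟨Or.inr (Or.inl (by simp)), h⟩
    · refine ⟨Or.inl ⟨hm, ?_, ?_, ?_, ?_⟩, ht⟩
      · rintro ⟨-, rfl, rfl⟩; exact hne ⟨rfl, rfl⟩
      · rintro ⟨h1, -⟩; exact hxy' h1
      · rintro ⟨h1, -⟩; exact hxr h1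
      · rintro ⟨h1, -⟩; exact hxs h1

lemma succColors_of_insert_erase {C : Type} (g : V → T → C) {A B : Finset (V × T)} {a b : V × T}
    (hB : B = insert a (A.erase b)) (hb : b ∈ A) (ha : a ∉ A) (hg : g a.1 a.2 = g b.1 b.2) :
    B.val.map (fun p => g p.1 p.2) = A.val.map (fun p => g p.1 p.2) := by
  have ha' : a ∉ A.erase b := fun h => ha (Finset.mem_of_mem_erase h)
  have h1 : B.val = a ::ₘ (A.val.erase b) := by
    rw [hB, Finset.insert_val_of_notMem ha', Finset.erase_val]
  rw [h1, Multiset.map_cons, hg]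
  conv_rhs => rw [← Multiset.cons_erase (show b ∈ A.val from hb), Multiset.map_cons]

lemma map_eq_of_map_eq {α β γ : Type*} [DecidableEq α] (f : α → β) (g : α → γ)
    (H : ∀ a b, f a = f b → g a = g b) :
    ∀ (s₁ s₂ : Multiset α), s₁.map f = s₂.map f → s₁.map g = s₂.map g := by
  intro s₁
  induction s₁ using Multiset.induction with
  | empty =>
    intro s₂ h
    rw [Multiset.map_zero] at h
    have : s₂ = 0 := (Multiset.map_eq_zero).1 h.symm
    simp [this]
  | cons a sa ih =>
    intro s₂ h
    rw [Multiset.map_cons] at h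
    have hfa : f a ∈ s₂.map f := by rw [← h]; exact Multiset.mem_cons_self _ _
    obtain ⟨b, hb, hfb⟩ := Multiset.mem_map.1 hfa
    have hs₂ : s₂ = b ::ₘ s₂.erase b := (Multiset.cons_erase hb).symm
    rw [hs₂, Multiset.map_cons, hfb] at h
    have htail : sa.map f = (s₂.erase b).map f := (Multiset.cons_inj_right _).1 h
    rw [hs₂, Multiset.map_cons, Multiset.map_cons, H a b hfb.symm, ih _ htail]

/-- **Swaps preserve stable colorings and refinement partitions.** If `c` is a stable coloring
of the undirected temporal graph `G = (V, E)` (equal colors iff equal pairs of color and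
successor-color multiset) and `G'` is obtained from `G` by an in-time swap respecting `c`, then
`c` is also a stable coloring of `G'`, and for every depth `d` the temporal refinement colors of
`G` and `G'` (started from the uniform coloring) induce the same partition of temporal nodes. -/
theorem swap_preserves_stable_coloring {C : Type}
    (E : Finset (V × V × T)) (c : V → T → C)
    (hsymm : ∀ u w t', (u,w,t') ∈ E → (w,u,t') ∈ E)
    (hloop : ∀ u t', (u,u,t') ∉ E)
    (hstable : ∀ v t w s, c v t = c w s ↔
      (c v t, succColors E c v t) = (c w s, succColors E c w s))
    (x y r s : V) (t : T)
    (hxy : (x,y,t) ∈ E) (hrs : (r,s,t) ∈ E)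
    (hcx : c x t = c r t) (hcy : c y t = c s t)
    (hxs : x ≠ s) (hry : r ≠ y)
    (hnew1 : (x,s,t) ∉ E) (hnew2 : (r,y,t) ∉ E) :
    (∀ v t' w s', c v t' = c w s' ↔
      (c v t', succColors (swapE E x y r s t) c v t') =
      (c w s', succColors (swapE E x y r s t) c w s'))
    ∧ ∀ (d : ℕ) (v : V) (t' : T) (w : V) (s' : T),
        refine E (fun _ _ => (() : Unit)) d v t' = refine E (fun _ _ => ()) d w s' ↔
        refine (swapE E x y r s t) (fun _ _ => ()) d v t' =
          refine (swapE E x y r s t) (fun _ _ => ()) d w s' := by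
  classical
  -- distinctness facts
  have hxy' : x ≠ y := by rintro rfl; exact hloop x t hxy
  have hrs' : r ≠ s := by rintro rfl; exact hloop r t hrs
  have hxr : x ≠ r := by rintro rfl; exact hnew1 hrs
  have hys : y ≠ s := by rintro rfl; exact hnew1 hxy
  -- symmetric edge facts
  have hyx : (y,x,t) ∈ E := hsymm x y t hxy
  have hsr : (s,r,t) ∈ E := hsymm r s t hrs
  have hsx : (s,x,t) ∉ E := fun h => hnew1 (hsymm s x t h)
  have hyr : (y,r,t) ∉ E := fun h => hnew2 (hsymm y r t h)
  -- the key lemma: succColors are invariant under the swap for any coloring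
  -- identifying x with r and y with s
  have key : ∀ {C' : Type} (g : V → T → C'), g x t = g r t → g y t = g s t →
      ∀ v t', succColors (swapE E x y r s t) g v t' = succColors E g v t' := by
    intro C' g hgx hgy v t'
    by_cases h : t' ≤ t
    · by_cases hvx : v = x
      · subst hvx
        exact succColors_of_insert_erase g (succF_swap_x hxy' hxr hxs hxy hnew1 h)
          (mem_succF.2 ⟨hxy, h⟩) (fun hm => hnew1 (mem_succF.1 hm).1) hgy.symm
      by_cases hvy : v = y
      · rw [hvy]
        have e1 : succF (swapE E x y r s t) y t' =
            insert (r,t) ((succF E y t').erase (x,t)) := by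
          rw [← swapE_perm1 E x y r s t]
          exact succF_swap_x hxy'.symm hys hry.symm hyx hyr h
        exact succColors_of_insert_erase g e1 (mem_succF.2 ⟨hyx, h⟩)
          (fun hm => hyr (mem_succF.1 hm).1) hgx.symm
      by_cases hvr : v = r
      · rw [hvr]
        have e1 : succF (swapE E x y r s t) r t' =
            insert (y,t) ((succF E r t').erase (s,t)) := by
          rw [← swapE_perm2 E x y r s t]
          exact succF_swap_x hrs' hxr.symm hry hrs hnew2 h
        exact succColors_of_insert_erase g e1 (mem_succF.2 ⟨hrs, h⟩)
          (fun hm => hnew2 (mem_succF.1 hm).1) hgy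
      by_cases hvs : v = s
      · rw [hvs]
        have e1 : succF (swapE E x y r s t) s t' =
            insert (x,t) ((succF E s t').erase (r,t)) := by
          rw [← swapE_perm2 E x y r s t, ← swapE_perm1 E r s x y t]
          exact succF_swap_x hrs'.symm hys.symm hxs.symm hsr hsx h
        exact succColors_of_insert_erase g e1 (mem_succF.2 ⟨hsr, h⟩)
          (fun hm => hsx (mem_succF.1 hm).1) hgx
      · unfold succColors
        rw [succF_swap_other hvx hvy hvr hvs]
    · unfold succColors
      rw [succF_swap_late v h]
  constructor
  · intro v t' w s'
    rw [key c hcx hcy, key c hcx hcy]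
    exact hstable v t' w s'
  · -- stable colorings determine refinement colors
    have hrefB : ∀ (d : ℕ) (v : V) (t' : T) (w : V) (s' : T), c v t' = c w s' →
        refine E (fun _ _ => ()) d v t' = refine E (fun _ _ => ()) d w s' := by
      intro d
      induction d with
      | zero => intro v t' w s' _; rfl
      | succ d ih =>
        intro v t' w s' h
        have hsc : succColors E c v t' = succColors E c w s' :=
          congrArg Prod.snd ((hstable v t' w s').1 h)
        show (_, _) = (_, _)
        rw [Prod.mk.injEq]
        exact ⟨ih v t' w s' h,
          map_eq_of_map_eq (fun p : V × T => c p.1 p.2)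
            (fun p : V × T => refine E (fun _ _ => ()) d p.1 p.2)
            (fun a b hab => ih a.1 a.2 b.1 b.2 hab) _ _ hsc⟩
    have hrefEq : ∀ (d : ℕ) (v : V) (t' : T),
        refine (swapE E x y r s t) (fun _ _ => ()) d v t' =
          refine E (fun _ _ => ()) d v t' := by
      intro d
      induction d with
      | zero => intro v t'; rfl
      | succ d ih =>
        intro v t'
        show (_, _) = (_, _)
        rw [Prod.mk.injEq]
        refine ⟨ih v t', ?_⟩
        have hfun : (fun p : V × T =>
              refine (swapE E x y r s t) (fun _ _ => ()) d p.1 p.2) =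
            (fun p : V × T => refine E (fun _ _ => ()) d p.1 p.2) :=
          funext fun p => ih p.1 p.2
        rw [hfun]
        exact key (fun a b => refine E (fun _ _ => ()) d a b)
          (hrefB d x t r t hcx) (hrefB d y t s t hcy) v t'
    intro d v t' w s'
    rw [hrefEq d v t', hrefEq d w s']
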